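/- Let q ∈ ℝ and let 𝔤 be a real Lie algebra with a basis X₁, X₂, X₃, X₄ whose bracket relations on basis elements are ⁅X₂, X₃⁆ = −X₁, ⁅X₄, X₂⁆ = X₂, ⁅X₄, X₃⁆ = −X₃, and all other brackets of basis elements vanish. Let J be the linear endomorphism of 𝔤 with JX₁ = X₂, JX₂ = −X₁, JX₃ = X₄ − qX₂, JX₄ = −X₃ − qX₁. Then J ∘ J = −id and the Nijenhuis tensor N_J vanishes identically: N_J(x, y) = 0 for all x, y ∈ 𝔤. -/

import Mathlib

/-!
When `J² = -1`, the Nijenhuis tensor is skew-symmetric and satisfies `N(Jx, y) = -J N(x, y)`,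
so it vanishes as soon as it vanishes on a set `s` with `s ∪ J s` spanning. Here `X₁, X₃` is a
basis over `ℂ` for the complex structure `J`, so everything reduces to the short computation
`N(X₁, X₃) = 0`.
-/

open Submodule

namespace LinearMap

variable {R L : Type*} [CommRing R] [LieRing L] [LieAlgebra R L]

def nijenhuis (J : L →ₗ[R] L) : L →ₗ[R] L →ₗ[R] L :=
  mk₂ R (fun x y => ⁅J x, J y⁆ - J ⁅J x, y⁆ - J ⁅x, J y⁆ - ⁅x, y⁆)
    (fun x x' y => by simp only [map_add, add_lie]; abel)
    (fun c x y => by simp only [map_smul, smul_lie, smul_sub])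
    (fun x y y' => by simp only [map_add, lie_add]; abel)
    (fun c x y => by simp only [map_smul, lie_smul, smul_sub])

variable {J : L →ₗ[R] L}

theorem nijenhuis_apply (x y : L) :
    J.nijenhuis x y = ⁅J x, J y⁆ - J ⁅J x, y⁆ - J ⁅x, J y⁆ - ⁅x, y⁆ :=
  rfl

theorem nijenhuis_swap (x y : L) : J.nijenhuis y x = -J.nijenhuis x y := by
  rw [nijenhuis_apply, nijenhuis_apply, ← lie_skew (J x), ← lie_skew (J x) y, ← lie_skew x (J y),
    ← lie_skew x y]
  simp only [map_neg]
  abel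

theorem nijenhuis_self (x : L) : J.nijenhuis x x = 0 := by
  rw [nijenhuis_apply, lie_self, lie_self, ← lie_skew x (J x), map_neg]
  abel

theorem nijenhuis_apply_left (hJ : ∀ x, J (J x) = -x) (x y : L) :
    J.nijenhuis (J x) y = -J (J.nijenhuis x y) := by
  simp only [nijenhuis_apply, hJ, map_sub, neg_lie, map_neg]
  abel

theorem nijenhuis_apply_right (hJ : ∀ x, J (J x) = -x) (x y : L) :
    J.nijenhuis x (J y) = -J (J.nijenhuis x y) := by
  rw [nijenhuis_swap, nijenhuis_apply_left hJ, nijenhuis_swap, map_neg, neg_neg]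

theorem nijenhuis_eq_zero_of_span (hJ : ∀ x, J (J x) = -x) {s : Set L}
    (hs : span R (s ∪ J '' s) = ⊤) (h : ∀ x ∈ s, ∀ y ∈ s, J.nijenhuis x y = 0) :
    J.nijenhuis = 0 := by
  have hleft : ∀ x ∈ s, ∀ y ∈ s ∪ J '' s, J.nijenhuis x y = 0 := by
    rintro x hx y (hy | ⟨y, hy, rfl⟩)
    · exact h x hx y hy
    · rw [nijenhuis_apply_right hJ, h x hx y hy, map_zero, neg_zero]
  refine ext_on hs fun x hx => ext_on hs fun y hy => ?_
  rcases hx with hx | ⟨x, hx, rfl⟩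
  · exact hleft x hx y hy
  · rw [nijenhuis_apply_left hJ, hleft x hx y hy, map_zero, neg_zero]; rfl

theorem nijenhuis_eq_zero_of_span_pair (hJ : ∀ x, J (J x) = -x) {a b : L}
    (hspan : span R {a, J a, b, J b} = ⊤) (hab : J.nijenhuis a b = 0) : J.nijenhuis = 0 := by
  refine nijenhuis_eq_zero_of_span hJ (s := {a, b}) ?_ ?_
  · rw [← hspan, Set.image_pair]
    congr 1
    ext
    simp only [Set.mem_union, Set.mem_insert_iff, Set.mem_singleton_iff]
    tauto
  · simp only [Set.mem_insert_iff, Set.mem_singleton_iff]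
    rintro x (rfl | rfl) y (rfl | rfl)
    · exact nijenhuis_self _
    · exact hab
    · rw [nijenhuis_swap, hab, neg_zero]
    · exact nijenhuis_self _

end LinearMap

open LinearMap

theorem stmt12_general (q : ℝ) (L : Type*) [LieRing L] [LieAlgebra ℝ L] (X : Module.Basis (Fin 4) ℝ L)
    (h12 : ⁅X 0, X 1⁆ = 0) (h13 : ⁅X 0, X 2⁆ = 0) (h14 : ⁅X 0, X 3⁆ = 0)
    (h23 : ⁅X 1, X 2⁆ = -X 0)
    (h42 : ⁅X 3, X 1⁆ = X 1)
    (J : L →ₗ[ℝ] L)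
    (hJ1 : J (X 0) = X 1) (hJ2 : J (X 1) = -X 0)
    (hJ3 : J (X 2) = X 3 - q • X 1) (hJ4 : J (X 3) = -X 2 - q • X 0) :
    (∀ x : L, J (J x) = -x) ∧
      ∀ x y : L, ⁅J x, J y⁆ - J ⁅J x, y⁆ - J ⁅x, J y⁆ - ⁅x, y⁆ = 0 := by
  have hJJ : ∀ x, J (J x) = -x := by
    have : J ∘ₗ J = -LinearMap.id := X.ext fun i => by
      fin_cases i <;> simp [hJ1, hJ2, hJ3, hJ4, sub_eq_add_neg]
    exact fun x => congr($this x)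
  have hspan : span ℝ {X 0, J (X 0), X 2, J (X 2)} = ⊤ := by
    refine eq_top_iff.2 (X.span_eq ▸ span_le.2 ?_)
    rintro _ ⟨i, rfl⟩
    have hmem : {X 0, J (X 0), X 2, J (X 2)} ⊆ (span ℝ {X 0, J (X 0), X 2, J (X 2)} : Set L) :=
      subset_span
    have hX3 : X 3 = J (X 2) + q • J (X 0) := by rw [hJ3, hJ1, sub_add_cancel]
    fin_cases i
    · exact hmem (by simp)
    · exact hJ1 ▸ hmem (by simp)
    · exact hmem (by simp)
    · exact hX3 ▸ add_mem (hmem (by simp)) (smul_mem _ _ (hmem (by simp)))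
  have h02 : J.nijenhuis (X 0) (X 2) = 0 := by
    rw [nijenhuis_apply, hJ1, hJ3, h13, lie_sub, lie_smul, lie_self, h23, ← lie_skew, h42]
    simp [hJ1, h12, h14]
  have hN : J.nijenhuis = 0 := nijenhuis_eq_zero_of_span_pair hJJ hspan h02
  exact ⟨hJJ, fun x y => congr($hN x y)⟩

/-- On the real Lie algebra with basis `X₁, X₂, X₃, X₄` and brackets
`⁅X₂,X₃⁆ = -X₁`, `⁅X₄,X₂⁆ = X₂`, `⁅X₄,X₃⁆ = -X₃` (all other brackets of basis elements
vanishing) — the Lie algebra of Inoue surfaces of type `S⁺` and `S⁻` — the endomorphism `J`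
with `JX₁ = X₂`, `JX₂ = -X₁`, `JX₃ = X₄ - qX₂`, `JX₄ = -X₃ - qX₁` satisfies `J² = -id`
and has vanishing Nijenhuis tensor. -/
theorem stmt12 (q : ℝ) (L : Type*) [LieRing L] [LieAlgebra ℝ L] (X : Module.Basis (Fin 4) ℝ L)
    (h12 : ⁅X 0, X 1⁆ = 0) (h13 : ⁅X 0, X 2⁆ = 0) (h14 : ⁅X 0, X 3⁆ = 0)
    (h23 : ⁅X 1, X 2⁆ = -X 0)
    (h42 : ⁅X 3, X 1⁆ = X 1) (h43 : ⁅X 3, X 2⁆ = -X 2)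
    (J : L →ₗ[ℝ] L)
    (hJ1 : J (X 0) = X 1) (hJ2 : J (X 1) = -X 0)
    (hJ3 : J (X 2) = X 3 - q • X 1) (hJ4 : J (X 3) = -X 2 - q • X 0) :
    (∀ x : L, J (J x) = -x) ∧
      ∀ x y : L, ⁅J x, J y⁆ - J ⁅J x, y⁆ - J ⁅x, J y⁆ - ⁅x, y⁆ = 0 :=
  stmt12_general q L X h12 h13 h14 h23 h42 J hJ1 hJ2 hJ3 hJ4
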